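/- Let f_1 and f_2 be positive bumps on [0,1] with orbitals (a_1,b_1) and (a_2,b_2) respectively, and assume a_1 < a_2, b_2 < b_1, and b_2 ≤ f_1(a_2) (so that the orbital of f_2 lies inside a fundamental domain of f_1). Then the subgroup of Homeo_+([0,1]) generated by {f_1, f_2} is isomorphic to the restricted wreath product ℤ ≀ ℤ, i.e. to the semidirect product (⨁_{k∈ℤ} ℤ) ⋊ ℤ, where the generator of ℤ acts on the direct sum ⨁_{k∈ℤ} ℤ of copies of ℤ indexed by ℤ by shifting the index by 1. -/

import Mathlib

/-- The group of orientation-preserving homeomorphisms of `[0,1]`, modeled as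
order-isomorphisms of the unit interval. -/
abbrev Homeo := unitInterval ≃o unitInterval

/-- `f` is a positive bump with orbital `(a,b)`. -/
def IsPosBump (f : Homeo) (a b : ℝ) : Prop :=
  0 ≤ a ∧ a < b ∧ b ≤ 1 ∧
  (∀ x : unitInterval, (x : ℝ) ≤ (f x : ℝ)) ∧
  (∀ x : unitInterval, f x ≠ x ↔ a < (x : ℝ) ∧ (x : ℝ) < b)

/-- The shift automorphism of the direct sum `⨁_{k ∈ ℤ} ℤ` (modeled as finitely supported
functions `ℤ →₀ ℤ`), shifting the index by `1`. -/
noncomputable def shiftAut : MulAut (Multiplicative (ℤ →₀ ℤ)) :=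
  AddEquiv.toMultiplicative (Finsupp.domCongr (α := ℤ) (β := ℤ) (M := ℤ) (Equiv.addRight 1))

/-- The action of `ℤ` on `⨁_{k ∈ ℤ} ℤ` in which the generator shifts the index by `1`. -/
noncomputable def shiftAction : Multiplicative ℤ →* MulAut (Multiplicative (ℤ →₀ ℤ)) :=
  zpowersHom _ shiftAut

/-- The restricted wreath product `ℤ ≀ ℤ = (⨁_{k ∈ ℤ} ℤ) ⋊ ℤ`, where the generator of `ℤ`
acts on the direct sum of copies of `ℤ` indexed by `ℤ` by shifting the index by `1`. -/
abbrev WreathZZ := SemidirectProduct (Multiplicative (ℤ →₀ ℤ)) (Multiplicative ℤ) shiftAction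

/-!
Put `g k = f₁ ^ k * f₂ * f₁⁻¹ ^ k`. The orbital `(a₂, b₂)` of `f₂` lies in the fundamental
domain `[a₂, f₁ a₂)` of `f₁`, whose `f₁`-translates are pairwise disjoint, so the `g k` have
pairwise disjoint supports and commute. Hence `k`-th generator ↦ `g k`, top generator ↦ `f₁`
defines a homomorphism from `ℤ ≀ ℤ` onto `⟨f₁, f₂⟩`. It is injective: every `g k` fixes the
`f₁`-orbit of `a₂`, on which `f₁` acts freely, and this detects the top coordinate; a point
`q` of the orbital of `f₂` has its translate `f₁ ^ k q` moved by `g k` alone, and this detects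
the `k`-th base coordinate.
-/

open MulAction

namespace MulAction

variable {G α : Type*} [Group G] [MulAction G α]

theorem mem_fixedBy_conj_iff {c g : G} {x : α} :
    x ∈ fixedBy α (MulAut.conj c g) ↔ c⁻¹ • x ∈ fixedBy α g := by
  simp only [mem_fixedBy, MulAut.conj_apply, mul_smul, ← eq_inv_smul_iff (g := c)]

theorem commute_of_disjoint_movedBy [FaithfulSMul G α] {g h : G}
    (hgh : Disjoint (fixedBy α g)ᶜ (fixedBy α h)ᶜ) : Commute g h := by
  have fixed_of_moved : ∀ {g h : G}, Disjoint (fixedBy α g)ᶜ (fixedBy α h)ᶜ →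
      ∀ x, x ∉ fixedBy α g → x ∈ fixedBy α h := fun hd x hx => by
    by_contra hx'
    exact Set.disjoint_left.mp hd hx hx'
  refine smul_left_injective' (M := G) (α := α) (funext fun x => ?_)
  simp only [mul_smul]
  by_cases hx : x ∈ fixedBy α h
  · have hgx : g • x ∈ fixedBy α h := by
      by_cases hxg : x ∈ fixedBy α g
      · rwa [hxg]
      · exact fixed_of_moved hgh _ (by rwa [smul_mem_fixedBy_iff_mem_fixedBy])
    rw [hx, hgx]
  · have hhx : h • x ∉ fixedBy α h := by rwa [smul_mem_fixedBy_iff_mem_fixedBy]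
    rw [fixed_of_moved hgh.symm _ hhx, fixed_of_moved hgh.symm _ hx]

end MulAction

namespace OrderIso

variable {α : Type*} [Preorder α]

theorem zpow_add_one_apply (f : α ≃o α) (n : ℤ) (x : α) : (f ^ (n + 1)) x = (f ^ n) (f x) := by
  rw [zpow_add_one, RelIso.mul_apply]

variable {f : α ≃o α}

theorem monotone_zpow_apply {x : α} (hx : x ≤ f x) : Monotone fun n : ℤ => (f ^ n) x :=
  monotone_int_of_le_succ fun n => by
    simpa only [zpow_add_one_apply] using (f ^ n).monotone hx

theorem strictMono_zpow_apply {x : α} (hx : x < f x) : StrictMono fun n : ℤ => (f ^ n) x :=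
  strictMono_int_of_lt_succ fun n => by
    simpa only [zpow_add_one_apply] using (f ^ n).strictMono hx

theorem zpow_apply_notMem_Ico_of_pos {c x : α} (hc : c ≤ f c) (hx : x ∈ Set.Ico c (f c))
    {n : ℤ} (hn : 0 < n) : (f ^ n) x ∉ Set.Ico c (f c) := fun hnx => by
  have hfc : f c ≤ (f ^ n) c := by simpa using monotone_zpow_apply hc (show 1 ≤ n by omega)
  exact lt_irrefl _ ((hfc.trans ((f ^ n).monotone hx.1)).trans_lt hnx.2)

theorem zpow_apply_notMem_Ico {c x : α} (hc : c ≤ f c) (hx : x ∈ Set.Ico c (f c))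
    {n : ℤ} (hn : n ≠ 0) : (f ^ n) x ∉ Set.Ico c (f c) := by
  rcases hn.lt_or_gt with hn | hn
  · intro hnx
    refine zpow_apply_notMem_Ico_of_pos hc hnx (neg_pos.mpr hn) ?_
    rwa [← RelIso.mul_apply, ← zpow_add, neg_add_cancel, zpow_zero]
  · exact zpow_apply_notMem_Ico_of_pos hc hx hn

end OrderIso

namespace WreathZZ

theorem shiftAut_zpow_single (n k m : ℤ) :
    (shiftAut ^ n) (.ofAdd (Finsupp.single k m)) = .ofAdd (Finsupp.single (k + n) m) := by
  have shiftAut_single : ∀ k, shiftAut (.ofAdd (Finsupp.single k m)) =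
      .ofAdd (Finsupp.single (k + 1) m) := fun k => Finsupp.equivMapDomain_single _ _ _
  induction n using Int.induction_on generalizing k with
  | zero => simp
  | succ n ih =>
    rw [zpow_add_one, MulAut.mul_apply, shiftAut_single, ih]
    congr 2; ring
  | pred n ih =>
    have shiftAut_inv_single : shiftAut⁻¹ (.ofAdd (Finsupp.single k m)) =
        .ofAdd (Finsupp.single (k - 1) m) := by
      rw [← MulAut.inv_apply_self _ shiftAut (.ofAdd (Finsupp.single (k - 1) m)), shiftAut_single,
        sub_add_cancel]
    rw [zpow_sub_one, MulAut.mul_apply, shiftAut_inv_single, ih]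
    congr 2; ring

theorem shiftAction_single (n : Multiplicative ℤ) (k m : ℤ) :
    shiftAction n (.ofAdd (Finsupp.single k m)) = .ofAdd (Finsupp.single (k + n.toAdd) m) :=
  shiftAut_zpow_single n.toAdd k m

variable {G : Type*} [Group G] (t s : G)
  (hcomm : ∀ j k : ℤ, Commute (MulAut.conj (t ^ j) s) (MulAut.conj (t ^ k) s))

open scoped IsMulCommutative in
noncomputable def baseLift : Multiplicative (ℤ →₀ ℤ) →* G :=
  letI H := Subgroup.closure (Set.range fun k : ℤ => MulAut.conj (t ^ k) s)
  haveI : IsMulCommutative H := Subgroup.isMulCommutative_closure <| by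
    rintro _ ⟨j, rfl⟩ _ ⟨k, rfl⟩
    exact hcomm j k
  H.subtype.comp <| AddMonoidHom.toMultiplicativeLeft <|
    Finsupp.liftAddHom fun k => zmultiplesHom _ <|
      Additive.ofMul ⟨_, Subgroup.subset_closure (Set.mem_range_self k)⟩

theorem baseLift_single (k m : ℤ) :
    baseLift t s hcomm (.ofAdd (Finsupp.single k m)) = MulAut.conj (t ^ k) s ^ m := by
  simp only [baseLift, MonoidHom.comp_apply, AddMonoidHom.toMultiplicativeLeft_apply_apply,
    toAdd_ofAdd, Finsupp.liftAddHom_apply_single, zmultiplesHom_apply, Subgroup.coe_subtype]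
  rfl

theorem baseLift_mem {H : Subgroup G} (d : ℤ →₀ ℤ)
    (hd : ∀ j ∈ d.support, MulAut.conj (t ^ j) s ∈ H) : baseLift t s hcomm (.ofAdd d) ∈ H := by
  induction d using Finsupp.induction with
  | zero => exact H.one_mem
  | single_add k m d hk hm ih =>
    rw [Finsupp.support_single_add hk hm] at hd
    rw [ofAdd_add, map_mul, baseLift_single]
    exact H.mul_mem (H.zpow_mem (hd k (Finset.mem_cons_self _ _)) m)
      (ih fun j hj => hd j (Finset.mem_cons_of_mem hj))

theorem baseLift_shiftAction (n : Multiplicative ℤ) :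
    (baseLift t s hcomm).comp (shiftAction n).toMonoidHom =
      (MulAut.conj (zpowersHom G t n)).toMonoidHom.comp (baseLift t s hcomm) := by
  refine Finsupp.mulHom_ext fun k m => ?_
  simp only [MonoidHom.comp_apply, MulEquiv.coe_toMonoidHom, zpowersHom_apply,
    shiftAction_single, baseLift_single]
  rw [← map_zpow, ← map_zpow, ← MulAut.mul_apply, ← map_mul, ← zpow_add, add_comm]

noncomputable def lift : WreathZZ →* G :=
  SemidirectProduct.lift (baseLift t s hcomm) (zpowersHom G t) (baseLift_shiftAction t s hcomm)

theorem lift_apply (w : WreathZZ) :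
    lift t s hcomm w = baseLift t s hcomm w.left * t ^ w.right.toAdd :=
  rfl

theorem range_lift : (lift t s hcomm).range = Subgroup.closure {t, s} := by
  have ht : t ∈ Subgroup.closure {t, s} := Subgroup.subset_closure (Set.mem_insert _ _)
  have hs : s ∈ Subgroup.closure {t, s} := Subgroup.subset_closure (Set.mem_insert_of_mem _ rfl)
  refine le_antisymm ?_ ((Subgroup.closure_le _).mpr ?_)
  · rintro _ ⟨w, rfl⟩
    rw [lift_apply]
    refine mul_mem (baseLift_mem t s hcomm _ fun j _ => ?_) (zpow_mem ht _)
    rw [MulAut.conj_apply]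
    exact mul_mem (mul_mem (zpow_mem ht j) hs) (inv_mem (zpow_mem ht j))
  · rintro x (rfl | rfl)
    · exact ⟨SemidirectProduct.inr (.ofAdd 1), by simp [lift]⟩
    · refine ⟨SemidirectProduct.inl (.ofAdd (Finsupp.single 0 1)), ?_⟩
      rw [lift, SemidirectProduct.lift_inl, baseLift_single]
      simp

section Action

variable {X : Type*} [MulAction G X]

theorem baseLift_smul_of_mem_fixedBy {x : X} {k : ℤ}
    (hx : ∀ j ≠ k, x ∈ fixedBy X (MulAut.conj (t ^ j) s)) (d : ℤ →₀ ℤ) :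
    baseLift t s hcomm (.ofAdd d) • x = MulAut.conj (t ^ k) s ^ d k • x := by
  have hrest : baseLift t s hcomm (.ofAdd (d.erase k)) ∈ stabilizer G x :=
    baseLift_mem t s hcomm _ fun j hj => by
      rw [Finsupp.support_erase, Finset.mem_erase] at hj
      exact hx j hj.1
  calc baseLift t s hcomm (.ofAdd d) • x
      = baseLift t s hcomm (.ofAdd (Finsupp.single k (d k) + d.erase k)) • x := by
        rw [Finsupp.single_add_erase]
    _ = MulAut.conj (t ^ k) s ^ d k • x := by
        rw [ofAdd_add, map_mul, mul_smul, mem_stabilizer_iff.mp hrest, baseLift_single]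

variable {V : Set X}

theorem zpow_smul_mem_fixedBy_conj (hsV : (fixedBy X s)ᶜ ⊆ V)
    (hV : ∀ n : ℤ, n ≠ 0 → ∀ x ∈ V, t ^ n • x ∉ V) {x : X} (hx : x ∈ V) {j k : ℤ}
    (hjk : k ≠ j) : t ^ k • x ∈ fixedBy X (MulAut.conj (t ^ j) s) := by
  rw [mem_fixedBy_conj_iff, ← mul_smul, ← zpow_neg, ← zpow_add]
  exact not_not.mp fun h => hV (-j + k) (by omega) x hx (hsV h)

theorem commute_conj_of_wandering [FaithfulSMul G X] (hsV : (fixedBy X s)ᶜ ⊆ V)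
    (hV : ∀ n : ℤ, n ≠ 0 → ∀ x ∈ V, t ^ n • x ∉ V) (j k : ℤ) :
    Commute (MulAut.conj (t ^ j) s) (MulAut.conj (t ^ k) s) := by
  rcases eq_or_ne j k with rfl | hjk
  · exact Commute.refl _
  refine commute_of_disjoint_movedBy (α := X) (Set.disjoint_left.mpr fun x hxj hxk => hxk ?_)
  rw [← smul_inv_smul (t ^ j) x]
  exact zpow_smul_mem_fixedBy_conj t s hsV hV (hsV (mem_fixedBy_conj_iff.not.mp hxj)) hjk

theorem lift_injective (hsV : (fixedBy X s)ᶜ ⊆ V)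
    (hV : ∀ n : ℤ, n ≠ 0 → ∀ x ∈ V, t ^ n • x ∉ V) {p q : X} (hp : p ∈ V) (hsp : s • p = p)
    (hq : ∀ m : ℤ, s ^ m • q = q → m = 0) : Function.Injective (lift t s hcomm) := by
  rw [injective_iff_map_eq_one]
  rintro ⟨c, n⟩ hw
  rw [lift_apply, mul_eq_one_iff_eq_inv] at hw
  have hn : n.toAdd = 0 := by
    have hfix : baseLift t s hcomm c ∈ stabilizer G (t ^ n.toAdd • p) := by
      refine baseLift_mem t s hcomm c.toAdd fun j _ => ?_
      rcases eq_or_ne n.toAdd j with rfl | hnj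
      · rwa [mem_stabilizer_iff, ← mem_fixedBy, mem_fixedBy_conj_iff, inv_smul_smul]
      · exact zpow_smul_mem_fixedBy_conj t s hsV hV hp hnj
    rw [mem_stabilizer_iff, hw, inv_smul_smul] at hfix
    exact not_not.mp fun h => hV _ h p hp (hfix ▸ hp)
  rw [hn, zpow_zero, inv_one] at hw
  have hqV : q ∈ V := hsV fun h => one_ne_zero (hq 1 (by rwa [zpow_one]))
  have hc : ∀ k, c.toAdd k = 0 := fun k => by
    have hk := baseLift_smul_of_mem_fixedBy t s hcomm
      (fun j hj => zpow_smul_mem_fixedBy_conj t s hsV hV hqV hj.symm) c.toAdd (x := t ^ k • q)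
    rw [ofAdd_toAdd, hw, one_smul, ← map_zpow, MulAut.conj_apply, mul_smul, mul_smul,
      inv_smul_smul] at hk
    exact hq _ (smul_left_cancel _ hk).symm
  exact SemidirectProduct.ext (toAdd_eq_zero.mp (Finsupp.ext hc)) (toAdd_eq_zero.mp hn)

end Action

end WreathZZ

/-- If the orbital of `f₂` lies inside a fundamental domain of `f₁`, then
`⟨f₁, f₂⟩ ≅ ℤ ≀ ℤ`. -/
theorem bumps_nested_iso_wreath
    (f₁ f₂ : Homeo) (a₁ b₁ a₂ b₂ : ℝ)
    (hf₁ : IsPosBump f₁ a₁ b₁) (hf₂ : IsPosBump f₂ a₂ b₂)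
    (h₁ : a₁ < a₂) (h₂ : b₂ < b₁)
    (h₃ : ∀ x : unitInterval, (x : ℝ) = a₂ → b₂ ≤ (f₁ x : ℝ)) :
    Nonempty ((Subgroup.closure {f₁, f₂} : Subgroup Homeo) ≃* WreathZZ) := by
  obtain ⟨-, -, -, hf₁_le, hf₁_moved⟩ := hf₁
  obtain ⟨ha₂, hab₂, hb₂, hf₂_le, hf₂_moved⟩ := hf₂
  let p : unitInterval := ⟨a₂, ha₂, hab₂.le.trans hb₂⟩
  let q : unitInterval := ⟨(a₂ + b₂) / 2, by linarith, by linarith⟩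
  have hp : p < f₁ p :=
    (show p ≤ f₁ p from hf₁_le p).lt_of_ne ((hf₁_moved p).mpr ⟨h₁, hab₂.trans h₂⟩).symm
  have hq : q < f₂ q := (show q ≤ f₂ q from hf₂_le q).lt_of_ne
    ((hf₂_moved q).mpr ⟨show a₂ < (a₂ + b₂) / 2 by linarith,
      show (a₂ + b₂) / 2 < b₂ by linarith⟩).symm
  have hsV : (MulAction.fixedBy unitInterval f₂)ᶜ ⊆ Set.Ico p (f₁ p) := fun x hx => by
    obtain ⟨hax, hxb⟩ := (hf₂_moved x).mp hx
    exact ⟨Subtype.coe_le_coe.mp hax.le, Subtype.coe_lt_coe.mp (hxb.trans_le (h₃ p rfl))⟩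
  have hV : ∀ n : ℤ, n ≠ 0 → ∀ x ∈ Set.Ico p (f₁ p), f₁ ^ n • x ∉ Set.Ico p (f₁ p) :=
    fun n hn x hx => OrderIso.zpow_apply_notMem_Ico hp.le hx hn
  have hcomm := WreathZZ.commute_conj_of_wandering f₁ f₂ hsV hV
  have hinj := WreathZZ.lift_injective f₁ f₂ hcomm hsV hV (p := p) (q := q)
    (Set.left_mem_Ico.mpr hp) (not_not.mp fun h => (hf₂_moved p).mp h |>.1.false)
    fun m hm => (OrderIso.strictMono_zpow_apply hq).injective (by simpa using hm)
  exact ⟨(MulEquiv.subgroupCongr (WreathZZ.range_lift f₁ f₂ hcomm).symm).trans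
    (MonoidHom.ofInjective hinj).symm⟩
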